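/- For every integer n ≥ 1, every 1 ≤ i ≤ n, and all 0 ≤ a, b ≤ n, the following identities hold in ℂ[W,Z]: (Q_a, Q_b)_{i,W} + (Q_a, Q_{b+1})_{i,Z} = 2·Q_a·Q_b^{[i;i]} and (Q_a, Q_b)_{i,W} + (Q_{a+1}, Q_b)_{i,Z} = 2·Q_a^{[i;i]}·Q_b, where Q_m := 0 and Q_m^{[i;i]} := 0 for m < 0 or m > n (respectively m > n−1). -/

import Mathlib

/-!
Write `M = W + λZ` over `ℂ[W,Z][λ]` and `B = adj M`. Jacobi's formula, applied to the
coefficientwise partial derivatives, gives `∂ det M / ∂w_{st} = B_{ts}` and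
`∂ det M / ∂z_{st} = λ B_{ts}`. Since `w_{st} p_a + z_{st} (λ p)_a = (M_{st} p)_a`, the two
brackets add up, term by term, to coefficients of `M_{st} B_{is}` and `M_{st} B_{ti}`; summing
over `s`, resp. `t`, and using `B M = M B = det M • 1` leaves `2 (det M)_a B_{ii}`, and `B_{ii}`
is the principal minor. Both brackets are symmetric, so the second identity is the first one with
`a` and `b` exchanged.
-/

noncomputable section

/-- Variables for polynomials in the entries of two `N × N` matrices `W` (`Sum.inl`) and
`Z` (`Sum.inr`). -/
abbrev WZVars (N : ℕ) := (Fin N × Fin N) ⊕ (Fin N × Fin N)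

/-- The polynomial `Q_a(W,Z)` defined by `det(W + λ Z) = Σ_a Q_a(W,Z) λ^a`. -/
def Qpoly (N a : ℕ) : MvPolynomial (WZVars N) ℂ :=
  Polynomial.coeff
    (Matrix.det (Matrix.of fun s t : Fin N =>
      Polynomial.C (MvPolynomial.X (Sum.inl (s, t))) +
        Polynomial.X * Polynomial.C (MvPolynomial.X (Sum.inr (s, t))))) a

/-- The polynomial `Q_a^{[i;i]}(W,Z)`: the coefficient of `λ^a` in the determinant of the
matrix obtained from `W + λ Z` (of size `n+1`) by deleting row `i` and column `i`. -/
def QpolyMinor (n : ℕ) (i : Fin (n + 1)) (a : ℕ) : MvPolynomial (WZVars (n + 1)) ℂ :=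
  Polynomial.coeff
    (Matrix.det (Matrix.of fun s t : Fin n =>
      Polynomial.C (MvPolynomial.X (Sum.inl (i.succAbove s, i.succAbove t))) +
        Polynomial.X *
          Polynomial.C (MvPolynomial.X (Sum.inr (i.succAbove s, i.succAbove t))))) a

/-- The bracket `(Q,Q')_{i,W} = Σ_{s,t} w_{s,t}·(∂Q/∂w_{s,i}·∂Q'/∂w_{i,t} + ∂Q/∂w_{i,t}·∂Q'/∂w_{s,i})`. -/
def brW (N : ℕ) (i : Fin N) (Q Q' : MvPolynomial (WZVars N) ℂ) : MvPolynomial (WZVars N) ℂ :=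
  ∑ s : Fin N, ∑ t : Fin N,
    MvPolynomial.X (Sum.inl (s, t)) *
      (MvPolynomial.pderiv (Sum.inl (s, i)) Q * MvPolynomial.pderiv (Sum.inl (i, t)) Q' +
        MvPolynomial.pderiv (Sum.inl (i, t)) Q * MvPolynomial.pderiv (Sum.inl (s, i)) Q')

/-- The bracket `(Q,Q')_{i,Z} = Σ_{s,t} z_{s,t}·(∂Q/∂z_{s,i}·∂Q'/∂z_{i,t} + ∂Q/∂z_{i,t}·∂Q'/∂z_{s,i})`. -/
def brZ (N : ℕ) (i : Fin N) (Q Q' : MvPolynomial (WZVars N) ℂ) : MvPolynomial (WZVars N) ℂ :=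
  ∑ s : Fin N, ∑ t : Fin N,
    MvPolynomial.X (Sum.inr (s, t)) *
      (MvPolynomial.pderiv (Sum.inr (s, i)) Q * MvPolynomial.pderiv (Sum.inr (i, t)) Q' +
        MvPolynomial.pderiv (Sum.inr (i, t)) Q * MvPolynomial.pderiv (Sum.inr (s, i)) Q')


open Polynomial Finset

namespace Derivation

variable {R A M : Type*} [CommRing R] [CommRing A] [Algebra R A]

theorem leibniz_prod [AddCommGroup M] [Module A M] [Module R M] {ι : Type*}
    [DecidableEq ι] (D : Derivation R A M) (s : Finset ι) (f : ι → A) :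
    D (∏ k ∈ s, f k) = ∑ j ∈ s, (∏ k ∈ s.erase j, f k) • D (f j) := by
  induction s using Finset.induction_on with
  | empty => simp
  | insert x s hx ih =>
    rw [prod_insert hx, leibniz, ih, sum_insert hx, erase_insert hx, smul_sum, add_comm]
    congr 1
    refine sum_congr rfl fun j hj => ?_
    rw [erase_insert_of_ne (ne_of_mem_of_not_mem hj hx).symm,
      prod_insert fun h => hx (mem_of_mem_erase h), mul_smul]

theorem leibniz_det {n : Type*} [Fintype n] [DecidableEq n] (D : Derivation R A A)
    (M : Matrix n n A) : D M.det = ∑ j, ∑ p, M.adjugate j p * D (M p j) := by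
  have hcol : ∀ j, ∑ p, M.adjugate j p * D (M p j) =
      (M.updateCol j fun p => D (M p j)).det := fun j => by
    rw [← Matrix.cramer_apply, Matrix.cramer_eq_adjugate_mulVec]; rfl
  simp only [hcol, Matrix.det_apply', map_sum, leibniz, leibniz_prod, map_intCast,
    smul_eq_mul, mul_zero, add_zero, mul_sum]
  rw [sum_comm]
  refine sum_congr rfl fun j _ => sum_congr rfl fun σ _ => ?_
  rw [← mul_prod_erase univ _ (mem_univ j)]
  simp only [Matrix.updateCol_self]
  rw [prod_congr rfl fun k hk => Matrix.updateCol_ne (ne_of_mem_erase hk)]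
  ring

def mapCoeffsSelf (d : Derivation R A A) : Derivation R A[X] A[X] :=
  PolynomialModule.equivPolynomialSelf.compDer d.mapCoeffs

theorem coeff_mapCoeffsSelf (d : Derivation R A A) (p : A[X]) (i : ℕ) :
    (d.mapCoeffsSelf p).coeff i = d (p.coeff i) :=
  rfl

theorem mapCoeffsSelf_C (d : Derivation R A A) (x : A) :
    d.mapCoeffsSelf (C x) = C (d x) := by
  ext i; simp [coeff_mapCoeffsSelf, coeff_C, apply_ite d]

theorem mapCoeffsSelf_X (d : Derivation R A A) :
    d.mapCoeffsSelf (X : A[X]) = 0 := by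
  ext i; simp [coeff_mapCoeffsSelf, coeff_X, apply_ite d]

end Derivation

namespace Matrix

variable {R A n : Type*} [CommRing R] [CommRing A] [Algebra R A]

def pencil (W Z : Matrix n n A) : Matrix n n A[X] :=
  of fun s t => C (W s t) + X * C (Z s t)

theorem mapCoeffsSelf_pencil_apply (d : Derivation R A A) (W Z : Matrix n n A) (s t : n) :
    d.mapCoeffsSelf (pencil W Z s t) = C (d (W s t)) + X * C (d (Z s t)) := by
  simp [pencil, Derivation.leibniz, d.mapCoeffsSelf_C, d.mapCoeffsSelf_X]

theorem coeff_pencil_apply_mul (W Z : Matrix n n A) (s t : n) (p : A[X]) (a : ℕ) :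
    (pencil W Z s t * p).coeff a = W s t * p.coeff a + Z s t * (X * p).coeff a := by
  simp only [pencil, of_apply, add_mul, coeff_add, coeff_C_mul, mul_comm X, mul_assoc]

theorem pencil_adjugate_bracket_eq [Fintype n] [DecidableEq n] (W Z : Matrix n n A) (i : n)
    (a b : ℕ) :
    let M := pencil W Z
    let B := M.adjugate
    ∑ s, ∑ t, W s t * ((B i s).coeff a * (B t i).coeff b + (B t i).coeff a * (B i s).coeff b) +
      ∑ s, ∑ t, Z s t *
        ((X * B i s).coeff a * (B t i).coeff b + (X * B t i).coeff a * (B i s).coeff b) =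
      2 * (M.det.coeff a * (B i i).coeff b) := by
  intro M B
  have hcol : ∀ t, ∑ s, (M s t * B i s).coeff a = if i = t then M.det.coeff a else 0 := by
    intro t
    simp_rw [← finsetSum_coeff, mul_comm (M _ t), ← mul_apply, B, adjugate_mul, smul_apply,
      one_apply]
    split_ifs <;> simp
  have hrow : ∀ s, ∑ t, (M s t * B t i).coeff a = if s = i then M.det.coeff a else 0 := by
    intro s
    simp_rw [← finsetSum_coeff, ← mul_apply, B, mul_adjugate, smul_apply, one_apply]
    split_ifs <;> simp
  calc _ = ∑ s, ∑ t, ((M s t * B i s).coeff a * (B t i).coeff b +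
        (M s t * B t i).coeff a * (B i s).coeff b) := by
        simp only [← sum_add_distrib, M, coeff_pencil_apply_mul]; congr! 2; ring
    _ = ∑ t, (∑ s, (M s t * B i s).coeff a) * (B t i).coeff b +
        ∑ s, (∑ t, (M s t * B t i).coeff a) * (B i s).coeff b := by
        simp only [sum_add_distrib, sum_mul]; rw [sum_comm]
    _ = _ := by simp [hcol, hrow, two_mul]

end Matrix

open Matrix
open MvPolynomial (pderiv pderiv_X)

def genericPencil (N : ℕ) : Matrix (Fin N) (Fin N) (MvPolynomial (WZVars N) ℂ)[X] :=
  pencil (of fun s t => MvPolynomial.X (Sum.inl (s, t)))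
    (of fun s t => MvPolynomial.X (Sum.inr (s, t)))

theorem Qpoly_eq_coeff_det (N a : ℕ) : Qpoly N a = (genericPencil N).det.coeff a :=
  rfl

theorem mapCoeffsSelf_pderiv_inl_genericPencil_apply (N : ℕ) (s t p j : Fin N) :
    (pderiv (Sum.inl (s, t))).mapCoeffsSelf (genericPencil N p j) =
      if p = s ∧ j = t then 1 else 0 := by
  simp [genericPencil, mapCoeffsSelf_pencil_apply, pderiv_X, Pi.single_apply,
    apply_ite C]

theorem mapCoeffsSelf_pderiv_inr_genericPencil_apply (N : ℕ) (s t p j : Fin N) :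
    (pderiv (Sum.inr (s, t))).mapCoeffsSelf (genericPencil N p j) =
      if p = s ∧ j = t then X else 0 := by
  simp [genericPencil, mapCoeffsSelf_pencil_apply, pderiv_X, Pi.single_apply,
    apply_ite C]

theorem pderiv_inl_Qpoly (N : ℕ) (s t : Fin N) (a : ℕ) :
    pderiv (Sum.inl (s, t)) (Qpoly N a) =
      ((genericPencil N).adjugate t s).coeff a := by
  rw [Qpoly_eq_coeff_det, ← Derivation.coeff_mapCoeffsSelf, Derivation.leibniz_det]
  simp [mapCoeffsSelf_pderiv_inl_genericPencil_apply, ite_and]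

theorem pderiv_inr_Qpoly (N : ℕ) (s t : Fin N) (a : ℕ) :
    pderiv (Sum.inr (s, t)) (Qpoly N a) =
      (X * (genericPencil N).adjugate t s).coeff a := by
  rw [Qpoly_eq_coeff_det, ← Derivation.coeff_mapCoeffsSelf, Derivation.leibniz_det]
  simp [mapCoeffsSelf_pderiv_inr_genericPencil_apply, ite_and, X_mul]

theorem QpolyMinor_eq_coeff_adjugate (n : ℕ) (i : Fin (n + 1)) (a : ℕ) :
    QpolyMinor n i a = ((genericPencil (n + 1)).adjugate i i).coeff a := by
  rw [adjugate_fin_succ_eq_det_submatrix,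
    (Even.add_self (i : ℕ)).neg_one_pow (α := (MvPolynomial (WZVars (n + 1)) ℂ)[X]), one_mul]
  rfl

theorem brW_comm (N : ℕ) (i : Fin N) (Q Q' : MvPolynomial (WZVars N) ℂ) :
    brW N i Q Q' = brW N i Q' Q :=
  sum_congr rfl fun _ _ => sum_congr rfl fun _ _ => by ring

theorem brZ_comm (N : ℕ) (i : Fin N) (Q Q' : MvPolynomial (WZVars N) ℂ) :
    brZ N i Q Q' = brZ N i Q' Q :=
  sum_congr rfl fun _ _ => sum_congr rfl fun _ _ => by ring

theorem brW_add_brZ_Qpoly_succ (N : ℕ) (i : Fin N) (a b : ℕ) :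
    brW N i (Qpoly N a) (Qpoly N b) + brZ N i (Qpoly N a) (Qpoly N (b + 1)) =
      (2 : ℂ) • (Qpoly N a * ((genericPencil N).adjugate i i).coeff b) := by
  simp only [brW, brZ, pderiv_inl_Qpoly, pderiv_inr_Qpoly, coeff_X_mul]
  rw [two_smul, ← two_mul]
  exact pencil_adjugate_bracket_eq _ _ i a b

theorem stmt13_general (n : ℕ) (i : Fin (n + 1)) (a b : ℕ) :
    brW (n + 1) i (Qpoly (n + 1) a) (Qpoly (n + 1) b) +
        brZ (n + 1) i (Qpoly (n + 1) a) (Qpoly (n + 1) (b + 1)) =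
      (2 : ℂ) • (Qpoly (n + 1) a * QpolyMinor n i b) ∧
    brW (n + 1) i (Qpoly (n + 1) a) (Qpoly (n + 1) b) +
        brZ (n + 1) i (Qpoly (n + 1) (a + 1)) (Qpoly (n + 1) b) =
      (2 : ℂ) • (QpolyMinor n i a * Qpoly (n + 1) b) := by
  simp only [QpolyMinor_eq_coeff_adjugate]
  refine ⟨brW_add_brZ_Qpoly_succ _ i a b, ?_⟩
  rw [brW_comm, brZ_comm, mul_comm]
  exact brW_add_brZ_Qpoly_succ _ i b a

/-- For matrices of size `n + 1 ≥ 1`, every `1 ≤ i ≤ n + 1` and all `0 ≤ a, b ≤ n + 1`: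
`(Q_a, Q_b)_{i,W} + (Q_a, Q_{b+1})_{i,Z} = 2·Q_a·Q_b^{[i;i]}` and
`(Q_a, Q_b)_{i,W} + (Q_{a+1}, Q_b)_{i,Z} = 2·Q_a^{[i;i]}·Q_b`.
(Out-of-range polynomials `Q_m`, `Q_m^{[i;i]}` vanish automatically, being coefficients of
`λ^m` beyond the degree.) -/
theorem stmt13 (n : ℕ) (i : Fin (n + 1)) (a b : ℕ) (ha : a ≤ n + 1) (hb : b ≤ n + 1) :
    brW (n + 1) i (Qpoly (n + 1) a) (Qpoly (n + 1) b) +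
        brZ (n + 1) i (Qpoly (n + 1) a) (Qpoly (n + 1) (b + 1)) =
      (2 : ℂ) • (Qpoly (n + 1) a * QpolyMinor n i b) ∧
    brW (n + 1) i (Qpoly (n + 1) a) (Qpoly (n + 1) b) +
        brZ (n + 1) i (Qpoly (n + 1) (a + 1)) (Qpoly (n + 1) b) =
      (2 : ℂ) • (QpolyMinor n i a * Qpoly (n + 1) b) :=
  stmt13_general n i a b
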